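/- arXiv:1612.07373 — 6 statements merged into one kernel-verified Lean document; each statement's English description precedes it below -/
import Mathlib

section
/- For every r ∈ ℝ one has B(S(r)) = ∫_0^r τ S'(τ) dτ, where S' denotes the derivative of S (which exists at almost every point since S is Lipschitz continuous, and the function τ ↦ τ S'(τ) is integrable on the interval with endpoints 0 and r). -/
/-!
For `r ≥ 0`, the region between the graph of `S` over `(0, r)` and the level `S r`, read with the
axes swapped, is the region under the pseudo-inverse over `(S 0, S r)`; comparing areas gives
`∫_{S 0}^{S r} Sⁱ = r S(r) - ∫_0^r S`, and negative `r` reduces to this through `x ↦ -S (-x)`.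
A Lipschitz function is absolutely continuous, so integration by parts turns `∫_0^r τ S'(τ) dτ`
into the same expression.
-/

open MeasureTheory
open scoped Classical

/-- Pseudo-inverse of a non-decreasing function `S`. -/
noncomputable def pseudoInv (S : ℝ → ℝ) (q : ℝ) : ℝ :=
  if S 0 < q then sInf {z : ℝ | S z = q}
  else if q = S 0 then 0
  else sSup {z : ℝ | S z = q}

/-- The extended-real-valued function `B` associated with `S`. -/
noncomputable def Bfun (S : ℝ → ℝ) (q : ℝ) : EReal :=
  if q ∈ Set.range S then ((∫ τ in (S 0)..q, pseudoInv S τ) : ℝ) else ⊤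

open Set

theorem pseudoInv_neg_comp_neg (S : ℝ → ℝ) (q : ℝ) :
    pseudoInv (fun x => -S (-x)) q = -pseudoInv S (-q) := by
  have hset : {z : ℝ | -S (-z) = q} = -{w : ℝ | S w = -q} := by
    ext z
    simp only [mem_ofPred_eq, mem_neg]
    constructor <;> intro h <;> linarith
  simp only [pseudoInv, neg_zero]
  rcases lt_trichotomy (S 0) (-q) with h | h | h
  · rw [if_neg (by linarith), if_neg (by linarith), if_pos h, hset, Real.sSup_neg]
  · rw [if_neg (by linarith), if_pos (by linarith), if_neg h.not_lt, if_pos h.symm, neg_zero]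
  · rw [if_pos (by linarith), if_neg h.not_gt, if_neg h.ne, hset, Real.sInf_neg]

section Monotone

variable {S : ℝ → ℝ}

theorem lt_pseudoInv_iff (hmono : Monotone S) (hcont : Continuous S) {q : ℝ} (hq₀ : S 0 < q)
    (hq : q ∈ range S) (τ : ℝ) : τ < pseudoInv S q ↔ S τ < q := by
  have hbdd : BddBelow {z | S z = q} :=
    ⟨0, fun z hz => (hmono.reflect_lt (hq₀.trans_eq hz.symm)).le⟩
  have hmem : S (sInf {z | S z = q}) = q :=
    (isClosed_eq hcont continuous_const).csInf_mem hq hbdd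
  rw [pseudoInv, if_pos hq₀]
  constructor
  · intro hτ
    exact (hmem ▸ hmono hτ.le).lt_of_ne fun h => (csInf_le hbdd h).not_gt hτ
  · intro hτ
    by_contra h
    exact (hmem ▸ hmono (not_lt.1 h)).not_gt hτ

theorem pseudoInv_nonneg (hmono : Monotone S) (hcont : Continuous S) {q : ℝ} (hq₀ : S 0 ≤ q)
    (hq : q ∈ range S) : 0 ≤ pseudoInv S q := by
  rcases hq₀.eq_or_lt with rfl | hq₀
  · simp [pseudoInv]
  · exact ((lt_pseudoInv_iff hmono hcont hq₀ hq 0).2 hq₀).le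

theorem monotoneOn_pseudoInv (hmono : Monotone S) (hcont : Continuous S) :
    MonotoneOn (pseudoInv S) (Ici (S 0) ∩ range S) := by
  rintro q ⟨hq₀ : S 0 ≤ q, hq⟩ q' ⟨hq₀' : S 0 ≤ q', hq'⟩ hqq'
  rcases hq₀.eq_or_lt with rfl | hq₀
  · simpa [pseudoInv] using pseudoInv_nonneg hmono hcont hq₀' hq'
  · refine le_of_forall_lt fun τ hτ => ?_
    rw [lt_pseudoInv_iff hmono hcont hq₀ hq] at hτ
    exact (lt_pseudoInv_iff hmono hcont (hq₀.trans_le hqq') hq' τ).2 (hτ.trans_le hqq')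

theorem integral_pseudoInv_eq_integral_sub_of_nonneg (hmono : Monotone S) (hcont : Continuous S)
    {r : ℝ} (hr : 0 ≤ r) :
    ∫ q in S 0..S r, pseudoInv S q = ∫ τ in 0..r, (S r - S τ) := by
  have hrange : Icc (S 0) (S r) ⊆ range S :=
    (intermediate_value_Icc hr hcont.continuousOn).trans (image_subset_range _ _)
  have hswap : regionBetween (fun _ => 0) (pseudoInv S) (Ioo (S 0) (S r))
      = Prod.swap ⁻¹' regionBetween S (fun _ => S r) (Ioo 0 r) := by
    ext ⟨q, τ⟩
    simp only [regionBetween, mem_ofPred_eq, mem_preimage, Prod.swap_prod_mk, mem_Ioo]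
    constructor
    · rintro ⟨⟨hq₀, hqr⟩, hτ₀, hτq⟩
      have hSτ := (lt_pseudoInv_iff hmono hcont hq₀ (hrange ⟨hq₀.le, hqr.le⟩) τ).1 hτq
      exact ⟨⟨hτ₀, hmono.reflect_lt (hSτ.trans hqr)⟩, hSτ, hqr⟩
    · rintro ⟨⟨hτ₀, -⟩, hSτ, hqr⟩
      have hq₀ : S 0 < q := (hmono hτ₀.le).trans_lt hSτ
      exact ⟨⟨hq₀, hqr⟩, hτ₀,
        (lt_pseudoInv_iff hmono hcont hq₀ (hrange ⟨hq₀.le, hqr.le⟩) τ).2 hSτ⟩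
  have hinv_nonneg : ∀ q ∈ Ioo (S 0) (S r), 0 ≤ pseudoInv S q := fun q hq =>
    pseudoInv_nonneg hmono hcont hq.1.le (hrange (Ioo_subset_Icc_self hq))
  have hinv_int : IntegrableOn (pseudoInv S) (Ioo (S 0) (S r)) :=
    ((monotoneOn_pseudoInv hmono hcont).mono fun q hq => ⟨hq.1, hrange hq⟩)
      |>.integrableOn_isCompact isCompact_Icc |>.mono_set Ioo_subset_Icc_self
  have hvol := congrArg (volume.prod volume) hswap
  rw [volume_regionBetween_eq_integral integrableOn_zero hinv_int measurableSet_Ioo hinv_nonneg,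
    Measure.measurePreserving_swap.measure_preimage (measurableSet_regionBetween
      hcont.measurable measurable_const measurableSet_Ioo).nullMeasurableSet,
    volume_regionBetween_eq_integral (hcont.integrableOn_Icc.mono_set Ioo_subset_Icc_self)
      (continuous_const.integrableOn_Icc.mono_set Ioo_subset_Icc_self) measurableSet_Ioo
      fun τ hτ => hmono hτ.2.le,
    ENNReal.ofReal_eq_ofReal_iff ?_ ?_] at hvol
  · rw [intervalIntegral.integral_of_le (hmono hr), intervalIntegral.integral_of_le hr,
      integral_Ioc_eq_integral_Ioo, integral_Ioc_eq_integral_Ioo]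
    simpa using hvol
  · exact setIntegral_nonneg measurableSet_Ioo fun q hq => sub_nonneg.2 (hinv_nonneg q hq)
  · exact setIntegral_nonneg measurableSet_Ioo fun τ hτ => sub_nonneg.2 (hmono hτ.2.le)

theorem integral_pseudoInv_eq_mul_sub_integral (hmono : Monotone S) (hcont : Continuous S)
    (r : ℝ) :
    ∫ q in S 0..S r, pseudoInv S q = r * S r - ∫ τ in 0..r, S τ := by
  wlog hr : 0 ≤ r generalizing S r
  · have := this (S := fun x => -S (-x)) (fun a b hab => neg_le_neg (hmono (neg_le_neg hab)))
      (by fun_prop) (-r) (by linarith)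
    simp only [neg_zero, neg_neg, pseudoInv_neg_comp_neg, intervalIntegral.integral_neg,
      intervalIntegral.integral_comp_neg (fun q => pseudoInv S q),
      intervalIntegral.integral_comp_neg S] at this
    rw [intervalIntegral.integral_symm (S 0), intervalIntegral.integral_symm 0] at this
    linarith
  rw [integral_pseudoInv_eq_integral_sub_of_nonneg hmono hcont hr, intervalIntegral.integral_sub
    intervalIntegrable_const (hcont.intervalIntegrable _ _), intervalIntegral.integral_const,
    smul_eq_mul, sub_zero]

end Monotone

/-- For every `r ∈ ℝ`, `B(S(r)) = ∫_0^r τ S'(τ) dτ`, where the derivative `S'` of the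
Lipschitz continuous function `S` exists at almost every point, and `τ ↦ τ S'(τ)` is
integrable on the interval with endpoints `0` and `r`. -/
theorem Bfun_comp_S_eq_integral (S : ℝ → ℝ) (L : NNReal)
    (hmono : Monotone S) (hlip : LipschitzWith L S) (r : ℝ) :
    (∀ᵐ τ : ℝ ∂volume, DifferentiableAt ℝ S τ) ∧
    IntervalIntegrable (fun τ : ℝ => τ * deriv S τ) volume 0 r ∧
    Bfun S (S r) = ((∫ τ in (0:ℝ)..r, τ * deriv S τ) : ℝ) := by
  have hS : AbsolutelyContinuousOnInterval S 0 r :=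
    hlip.lipschitzOnWith.absolutelyContinuousOnInterval
  have hid : AbsolutelyContinuousOnInterval id 0 r :=
    LipschitzWith.id.lipschitzOnWith.absolutelyContinuousOnInterval
  refine ⟨hmono.ae_differentiableAt, hS.intervalIntegrable_deriv.continuousOn_mul continuousOn_id,
    ?_⟩
  have hparts := hid.integral_mul_deriv_eq_deriv_mul hS
  simp only [deriv_id, one_mul, id, zero_mul, sub_zero] at hparts
  rw [Bfun, if_pos (mem_range_self r),
    integral_pseudoInv_eq_mul_sub_integral hmono hlip.continuous, hparts]
end

section
/- For all real numbers a and b one has a·(S(b) − S(a)) ≤ B(S(b)) − B(S(a)). (In particular both B(S(a)) and B(S(b)) are finite since S(a), S(b) ∈ R_S.) -/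
/-! For continuous non-decreasing `S`, the fibre `{z | S z = q}` of a value `q` is a closed
interval, so the pseudo-inverse picks a point of it: `S (S^i q) = q`. Hence `S^i` is strictly
increasing on the range of `S`, and `S^i τ ≥ a` for `τ > S a`, `S^i τ ≤ a` for `τ < S a`.
Since `B(S b) - B(S a) = ∫_{S a}^{S b} S^i`, comparing the integrand with the constant `a`
gives the inequality. -/

open MeasureTheory
open scoped Classical

lemma mul_sub_le_intervalIntegral {f : ℝ → ℝ} {x y c : ℝ}
    (hf : IntervalIntegrable f volume x y)
    (h_lt : ∀ t ∈ Set.Ioo x y, c ≤ f t) (h_gt : ∀ t ∈ Set.Ioo y x, f t ≤ c) :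
    c * (y - x) ≤ ∫ t in x..y, f t := by
  rcases le_total x y with hxy | hyx
  · have := intervalIntegral.integral_mono_on_of_le_Ioo hxy intervalIntegrable_const hf h_lt
    rwa [intervalIntegral.integral_const, smul_eq_mul, mul_comm] at this
  · have := intervalIntegral.integral_mono_on_of_le_Ioo hyx hf.symm intervalIntegrable_const h_gt
    rw [intervalIntegral.integral_const, smul_eq_mul] at this
    rw [intervalIntegral.integral_symm]
    linarith

section PseudoInverse

variable {S : ℝ → ℝ}

theorem apply_pseudoInv (hmono : Monotone S) (hcont : Continuous S) {q : ℝ}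
    (hq : q ∈ Set.range S) : S (pseudoInv S q) = q := by
  obtain ⟨w, rfl⟩ := hq
  have hclosed : IsClosed {z : ℝ | S z = S w} := isClosed_eq hcont continuous_const
  unfold pseudoInv
  split_ifs with hpos hzero
  · refine hclosed.csInf_mem ⟨w, rfl⟩ ⟨0, fun z hz => ?_⟩
    exact (hmono.reflect_lt (hz ▸ hpos : S 0 < S z)).le
  · exact hzero.symm
  · have hneg : S w < S 0 := lt_of_le_of_ne (not_lt.1 hpos) hzero
    refine hclosed.csSup_mem ⟨w, rfl⟩ ⟨0, fun z hz => ?_⟩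
    exact (hmono.reflect_lt (hz ▸ hneg : S z < S 0)).le

theorem strictMonoOn_pseudoInv (hmono : Monotone S) (hcont : Continuous S) :
    StrictMonoOn (pseudoInv S) (Set.range S) := fun q₁ hq₁ q₂ hq₂ hlt =>
  hmono.reflect_lt (by rwa [apply_pseudoInv hmono hcont hq₁, apply_pseudoInv hmono hcont hq₂])

theorem lt_pseudoInv_of_apply_lt (hmono : Monotone S) (hcont : Continuous S) {a q : ℝ}
    (hq : q ∈ Set.range S) (h : S a < q) : a < pseudoInv S q :=
  hmono.reflect_lt (by rwa [apply_pseudoInv hmono hcont hq])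

theorem pseudoInv_lt_of_lt_apply (hmono : Monotone S) (hcont : Continuous S) {a q : ℝ}
    (hq : q ∈ Set.range S) (h : q < S a) : pseudoInv S q < a :=
  hmono.reflect_lt (by rwa [apply_pseudoInv hmono hcont hq])

end PseudoInverse

theorem Continuous.uIcc_subset_range {S : ℝ → ℝ} (hcont : Continuous S) (u v : ℝ) :
    Set.uIcc (S u) (S v) ⊆ Set.range S :=
  (intermediate_value_uIcc hcont.continuousOn).trans (Set.image_subset_range _ _)

/-- For all real `a` and `b`, `a·(S(b) − S(a)) ≤ B(S(b)) − B(S(a))`; in particular both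
`B(S(a))` and `B(S(b))` are finite since `S(a), S(b)` belong to the range of `S`. -/
theorem mul_sub_le_Bfun_sub (S : ℝ → ℝ) (L : NNReal)
    (hmono : Monotone S) (hlip : LipschitzWith L S) (a b : ℝ) :
    Bfun S (S a) ≠ ⊤ ∧ Bfun S (S b) ≠ ⊤ ∧
    ((a * (S b - S a) : ℝ) : EReal) ≤ Bfun S (S b) - Bfun S (S a) := by
  have hcont : Continuous S := hlip.continuous
  have hB (x : ℝ) : Bfun S (S x) = ((∫ τ in (S 0)..(S x), pseudoInv S τ : ℝ) : EReal) :=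
    if_pos ⟨x, rfl⟩
  have hint (u v : ℝ) : IntervalIntegrable (pseudoInv S) volume (S u) (S v) :=
    (((strictMonoOn_pseudoInv hmono hcont).monotoneOn).mono
      (hcont.uIcc_subset_range u v)).intervalIntegrable
  refine ⟨hB a ▸ EReal.coe_ne_top _, hB b ▸ EReal.coe_ne_top _, ?_⟩
  rw [hB, hB, ← EReal.coe_sub, EReal.coe_le_coe_iff,
    intervalIntegral.integral_interval_sub_left (hint 0 b) (hint 0 a)]
  refine mul_sub_le_intervalIntegral (hint a b) (fun τ hτ => ?_) (fun τ hτ => ?_)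
  · exact (lt_pseudoInv_of_apply_lt hmono hcont
      (hcont.uIcc_subset_range a b (Set.mem_uIcc_of_le hτ.1.le hτ.2.le)) hτ.1).le
  · exact (pseudoInv_lt_of_lt_apply hmono hcont
      (hcont.uIcc_subset_range a b (Set.mem_uIcc_of_ge hτ.1.le hτ.2.le)) hτ.2).le
end

section
/- Assume in addition that 0 ≤ S(z) ≤ 1 for all z ∈ ℝ. Then there exist constants K₀ > 0 and K₁, K₂ ≥ 0, depending only on the Lipschitz constant of S (and in particular not on r), such that for every r ∈ ℝ: K₀·S(r)² − K₁ ≤ B(S(r)) ≤ K₂·r². -/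
open MeasureTheory
open scoped Classical

/-! Since `S` is monotone, `pseudoInv S τ` lies between `0` and any preimage of `τ`, and by
continuity every `τ` between `S 0` and `S r` has a preimage between `0` and `r`. Hence
`0 ≤ ∫_{S 0}^{S r} pseudoInv S ≤ r (S r - S 0) ≤ L r²`. The lower bound then holds with
`K₀ = K₁ = 1`, as `S r ^ 2 - 1 ≤ 0`. -/

open Set

/-- The bounds also hold when `f` is not integrable, for the junk value `0`. -/
lemma intervalIntegral.integral_mem_Icc_of_mem_Icc {f : ℝ → ℝ} {a b c : ℝ} (hab : a ≤ b)
    (hf : ∀ x ∈ Icc a b, f x ∈ Icc 0 c) : ∫ x in a..b, f x ∈ Icc 0 (c * (b - a)) := by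
  have hnorm := intervalIntegral.norm_integral_le_of_norm_le_const (f := f) (C := c)
    fun x hx => by
      have hfx := hf x (uIcc_of_le hab ▸ uIoc_subset_uIcc hx)
      rw [Real.norm_eq_abs, abs_of_nonneg hfx.1]
      exact hfx.2
  rw [abs_of_nonneg (sub_nonneg.2 hab)] at hnorm
  exact ⟨intervalIntegral.integral_nonneg hab fun x hx => (hf x hx).1,
    (le_abs_self _).trans hnorm⟩

section PseudoInv

variable {S : ℝ → ℝ} {τ z : ℝ}

lemma pseudoInv_mem_Icc_of_lt (hS : Monotone S) (hτ : S 0 < τ) (hz : S z = τ) :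
    pseudoInv S τ ∈ Icc 0 z := by
  have hlb : ∀ y ∈ {y : ℝ | S y = τ}, 0 ≤ y := fun y hy =>
    le_of_not_gt fun hy0 => (hy ▸ hS hy0.le).not_gt hτ
  rw [pseudoInv, if_pos hτ]
  exact ⟨le_csInf ⟨z, hz⟩ hlb, csInf_le ⟨0, hlb⟩ hz⟩

lemma pseudoInv_mem_Icc_of_gt (hS : Monotone S) (hτ : τ < S 0) (hz : S z = τ) :
    pseudoInv S τ ∈ Icc z 0 := by
  have hub : ∀ y ∈ {y : ℝ | S y = τ}, y ≤ 0 := fun y hy =>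
    le_of_not_gt fun hy0 => (hy ▸ hS hy0.le).not_gt hτ
  rw [pseudoInv, if_neg hτ.not_gt, if_neg hτ.ne]
  exact ⟨le_csSup ⟨0, hub⟩ hz, csSup_le ⟨z, hz⟩ hub⟩

variable {r : ℝ}

lemma pseudoInv_mem_Icc_of_nonneg (hS : Monotone S) (hc : Continuous S) (hr : 0 ≤ r)
    (hτ : τ ∈ Icc (S 0) (S r)) : pseudoInv S τ ∈ Icc 0 r := by
  rcases hτ.1.eq_or_lt with rfl | hlt
  · simp [pseudoInv, hr]
  · obtain ⟨z, hz, rfl⟩ := intermediate_value_Icc hr hc.continuousOn hτ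
    exact Icc_subset_Icc_right hz.2 (pseudoInv_mem_Icc_of_lt hS hlt rfl)

lemma pseudoInv_mem_Icc_of_nonpos (hS : Monotone S) (hc : Continuous S) (hr : r ≤ 0)
    (hτ : τ ∈ Icc (S r) (S 0)) : pseudoInv S τ ∈ Icc r 0 := by
  rcases hτ.2.eq_or_lt with rfl | hlt
  · simp [pseudoInv, hr]
  · obtain ⟨z, hz, rfl⟩ := intermediate_value_Icc hr hc.continuousOn hτ
    exact Icc_subset_Icc_left hz.1 (pseudoInv_mem_Icc_of_gt hS hlt rfl)

lemma integral_pseudoInv_mem_Icc (hS : Monotone S) (hc : Continuous S) (r : ℝ) :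
    ∫ τ in S 0..S r, pseudoInv S τ ∈ Icc 0 (r * (S r - S 0)) := by
  rcases le_total 0 r with hr | hr
  · exact intervalIntegral.integral_mem_Icc_of_mem_Icc (hS hr) fun τ hτ =>
      pseudoInv_mem_Icc_of_nonneg hS hc hr hτ
  · have h := intervalIntegral.integral_mem_Icc_of_mem_Icc (f := fun τ => -pseudoInv S τ)
      (c := -r) (hS hr) fun τ hτ => by
        obtain ⟨h₁, h₂⟩ := pseudoInv_mem_Icc_of_nonpos hS hc hr hτ
        exact ⟨neg_nonneg.2 h₂, neg_le_neg h₁⟩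
    rwa [intervalIntegral.integral_neg, ← intervalIntegral.integral_symm,
      show -r * (S 0 - S r) = r * (S r - S 0) by ring] at h

end PseudoInv

lemma LipschitzWith.mul_sub_apply_zero_le {L : NNReal} {S : ℝ → ℝ} (hS : LipschitzWith L S)
    (r : ℝ) : r * (S r - S 0) ≤ L * r ^ 2 := by
  have hdist : |S r - S 0| ≤ L * |r| := by simpa [Real.dist_eq] using hS.dist_le_mul r 0
  calc r * (S r - S 0) ≤ |r| * |S r - S 0| := by rw [← abs_mul]; exact le_abs_self _
    _ ≤ |r| * (L * |r|) := by gcongr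
    _ = L * r ^ 2 := by rw [mul_left_comm, ← sq, sq_abs]

lemma Bfun_apply_self (S : ℝ → ℝ) (r : ℝ) :
    Bfun S (S r) = ((∫ τ in S 0..S r, pseudoInv S τ : ℝ) : EReal) :=
  if_pos (mem_range_self r)

/-- If moreover `0 ≤ S ≤ 1`, then there are constants `K₀ > 0` and `K₁, K₂ ≥ 0`,
depending only on the Lipschitz constant `L` of `S`, such that for every `r`,
`K₀·S(r)² − K₁ ≤ B(S(r)) ≤ K₂·r²`. -/
theorem Bfun_quadratic_bounds (L : NNReal) :
    ∃ K₀ K₁ K₂ : ℝ, 0 < K₀ ∧ 0 ≤ K₁ ∧ 0 ≤ K₂ ∧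
      ∀ S : ℝ → ℝ, Monotone S → LipschitzWith L S → (∀ z, 0 ≤ S z ∧ S z ≤ 1) →
        ∀ r : ℝ,
          ((K₀ * (S r) ^ 2 - K₁ : ℝ) : EReal) ≤ Bfun S (S r) ∧
          Bfun S (S r) ≤ ((K₂ * r ^ 2 : ℝ) : EReal) := by
  refine ⟨1, 1, L, one_pos, zero_le_one, L.coe_nonneg, fun S hmono hLip hunit r => ?_⟩
  obtain ⟨hnonneg, hle⟩ := integral_pseudoInv_mem_Icc hmono hLip.continuous r
  have hsq : S r ^ 2 ≤ 1 := pow_le_one₀ (hunit r).1 (hunit r).2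
  rw [Bfun_apply_self, EReal.coe_le_coe_iff, EReal.coe_le_coe_iff]
  exact ⟨by linarith, hle.trans (hLip.mul_sub_apply_zero_le r)⟩
end

section
/- Let (X, μ) be a finite measure space and 0 < k_min ≤ k_max. Let (a_l)_{l∈ℕ} and (b_l)_{l∈ℕ} be sequences of measurable functions from X to [k_min, k_max] converging in L²(X, μ) to measurable functions a and b respectively, and let (β_l)_{l∈ℕ} ⊂ L²(X, μ) converge strongly in L²(X, μ) to β. Then the sequence a_l·β_l⁺ − b_l·β_l⁻ converges strongly in L²(X, μ) to a·β⁺ − b·β⁻. -/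
/-!
Split `a_l β_l⁺ − a β⁺ = a_l (β_l⁺ − β⁺) + (a_l − a) β⁺`, and likewise for the negative parts.
The first term is at most `sup |a_l|` times `‖β_l − β‖₂`, since `s ↦ s⁺` is 1-Lipschitz. For the
second term, L²-convergence of `a_l` only gives convergence in measure, hence a.e. convergence
along a further subsequence of any subsequence; there dominated convergence applies, with the
dominating function `2 sup |a_l| · β⁺ ∈ L²`.
-/

open MeasureTheory Filter Topology ENNReal
open scoped NNReal

section

variable {X E : Type*} [MeasurableSpace X] {μ : Measure X} {p : ℝ≥0∞}

theorem tendsto_eLpNorm_of_dominated_convergence [NormedAddCommGroup E] {F : ℕ → X → E} {bound : X → ℝ}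
    (hp : p ≠ ∞) (hF : ∀ n, AEStronglyMeasurable (F n) μ) (hbound : MemLp bound p μ)
    (h_bound : ∀ n, ∀ᵐ x ∂μ, ‖F n x‖ ≤ bound x)
    (h_lim : ∀ᵐ x ∂μ, Tendsto (fun n => F n x) atTop (𝓝 0)) :
    Tendsto (fun n => eLpNorm (F n) p μ) atTop (𝓝 0) := by
  rcases eq_or_ne p 0 with rfl | hp0
  · simp
  have hp_pos : 0 < p.toReal := toReal_pos hp0 hp
  suffices Tendsto (fun n => ∫⁻ x, ‖F n x‖ₑ ^ p.toReal ∂μ) atTop (𝓝 0) by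
    simp only [eLpNorm_eq_lintegral_rpow_enorm_toReal hp0 hp]
    have h := (continuous_rpow_const (y := 1 / p.toReal)).tendsto 0 |>.comp this
    rwa [zero_rpow_of_pos (one_div_pos.mpr hp_pos)] at h
  have h_fin : ∫⁻ x, ‖bound x‖ₑ ^ p.toReal ∂μ ≠ ∞ :=
    (lintegral_rpow_enorm_lt_top_of_eLpNorm_lt_top hp0 hp hbound.2).ne
  simpa [zero_rpow_of_pos hp_pos] using tendsto_lintegral_of_dominated_convergence' _
    (fun n => (hF n).enorm.pow_const _)
    (fun n => (h_bound n).mono fun x hx =>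
      rpow_le_rpow (enorm_le_iff_norm_le.mpr (hx.trans (le_abs_self _))) hp_pos.le) h_fin
    (h_lim.mono fun x hx => (continuous_rpow_const.tendsto _).comp hx.enorm)

theorem LipschitzWith.tendsto_eLpNorm_comp_sub_comp [NormedAddCommGroup E] {F : Type*}
    [NormedAddCommGroup F] {φ : E → F} {K : ℝ≥0} (hφ : LipschitzWith K φ) {f : ℕ → X → E}
    {g : X → E} (hfg : Tendsto (fun n => eLpNorm (f n - g) p μ) atTop (𝓝 0)) :
    Tendsto (fun n => eLpNorm (fun x => φ (f n x) - φ (g x)) p μ) atTop (𝓝 0) := by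
  have h_le n : eLpNorm (fun x => φ (f n x) - φ (g x)) p μ ≤ K * eLpNorm (f n - g) p μ :=
    eLpNorm_le_mul_eLpNorm_of_ae_le_mul' (ae_of_all _ fun x => by
      simpa only [edist_eq_enorm_sub, Pi.sub_apply] using hφ.edist_le_mul (f n x) (g x)) p
  have h_lim := ENNReal.Tendsto.const_mul hfg (Or.inr (coe_ne_top (r := K)))
  rw [mul_zero] at h_lim
  exact tendsto_of_tendsto_of_tendsto_of_le_of_le tendsto_const_nhds h_lim
    (fun _ => zero_le) h_le

theorem tendsto_eLpNorm_sub_mul_of_tendstoInMeasure {c : ℕ → X → ℝ} {C g : X → ℝ} {M : ℝ}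
    (hp : p ≠ ∞) (hc : ∀ n, AEStronglyMeasurable (c n) μ) (hcM : ∀ n, ∀ᵐ x ∂μ, |c n x| ≤ M)
    (hcC : TendstoInMeasure μ c atTop C) (hg : MemLp g p μ) :
    Tendsto (fun n => eLpNorm (fun x => (c n x - C x) * g x) p μ) atTop (𝓝 0) := by
  have hC := hcC.aestronglyMeasurable hc
  refine tendsto_of_subseq_tendsto fun ns hns => ?_
  obtain ⟨ms, -, hms⟩ := (hcC.comp hns).exists_seq_tendsto_ae
  have hCM : ∀ᵐ x ∂μ, |C x| ≤ M := by
    filter_upwards [hms, ae_all_iff.mpr hcM] with x hx hxM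
    exact le_of_tendsto hx.abs (Eventually.of_forall fun k => hxM _)
  refine ⟨ms, tendsto_eLpNorm_of_dominated_convergence hp (fun k => ((hc _).sub hC).mul hg.1)
    (hg.norm.const_mul (M + M)) (fun k => ?_) ?_⟩
  · filter_upwards [hcM (ns (ms k)), hCM] with x hcx hCx
    rw [norm_mul, Real.norm_eq_abs]
    gcongr
    exact (abs_sub _ _).trans (add_le_add hcx hCx)
  · filter_upwards [hms] with x hx
    simpa using (hx.sub_const (C x)).mul_const (g x)

theorem tendsto_eLpNorm_mul_sub_mul {c f : ℕ → X → ℝ} {C g : X → ℝ} {M : ℝ} (hp : 1 ≤ p)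
    (hp' : p ≠ ∞) (hc : ∀ n, AEStronglyMeasurable (c n) μ) (hcM : ∀ n, ∀ᵐ x ∂μ, |c n x| ≤ M)
    (hcC : TendstoInMeasure μ c atTop C) (hf : ∀ n, AEStronglyMeasurable (f n) μ)
    (hg : MemLp g p μ) (hfg : Tendsto (fun n => eLpNorm (f n - g) p μ) atTop (𝓝 0)) :
    Tendsto (fun n => eLpNorm ((fun x => c n x * f n x) - fun x => C x * g x) p μ)
      atTop (𝓝 0) := by
  have h_split n : ((fun x => c n x * f n x) - fun x => C x * g x) =
      (fun x => c n x * (f n x - g x)) + fun x => (c n x - C x) * g x := by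
    ext x
    simp only [Pi.sub_apply, Pi.add_apply]
    ring
  have h_le n : eLpNorm (fun x => c n x * (f n x - g x)) p μ ≤
      ENNReal.ofReal M * eLpNorm (f n - g) p μ :=
    eLpNorm_le_mul_eLpNorm_of_ae_le_mul ((hcM n).mono fun x hx => by
      rw [norm_mul, Real.norm_eq_abs]
      exact mul_le_mul_of_nonneg_right hx (norm_nonneg _)) p
  have h_first := ENNReal.Tendsto.const_mul hfg (Or.inr (ofReal_ne_top (r := M)))
  have h_second := tendsto_eLpNorm_sub_mul_of_tendstoInMeasure hp' hc hcM hcC hg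
  have h_lim := h_first.add h_second
  rw [mul_zero, zero_add] at h_lim
  refine tendsto_of_tendsto_of_tendsto_of_le_of_le tendsto_const_nhds h_lim
    (fun _ => zero_le) fun n => ?_
  rw [h_split]
  exact (eLpNorm_add_le ((hc n).mul ((hf n).sub hg.1))
    (((hc n).sub (hcC.aestronglyMeasurable hc)).mul hg.1) hp).trans (add_le_add_left (h_le n) _)

theorem tendsto_eLpNorm_sub_sub_sub [NormedAddCommGroup E] {u v : ℕ → X → E} {U V : X → E}
    (hp : 1 ≤ p) (hu : ∀ n, AEStronglyMeasurable (u n) μ) (hv : ∀ n, AEStronglyMeasurable (v n) μ)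
    (hU : AEStronglyMeasurable U μ) (hV : AEStronglyMeasurable V μ)
    (huU : Tendsto (fun n => eLpNorm (u n - U) p μ) atTop (𝓝 0))
    (hvV : Tendsto (fun n => eLpNorm (v n - V) p μ) atTop (𝓝 0)) :
    Tendsto (fun n => eLpNorm ((fun x => u n x - v n x) - fun x => U x - V x) p μ)
      atTop (𝓝 0) := by
  have h_lim := huU.add hvV
  rw [zero_add] at h_lim
  refine tendsto_of_tendsto_of_tendsto_of_le_of_le tendsto_const_nhds h_lim
    (fun _ => zero_le) fun n => ?_
  exact sub_sub_sub_comm (u n) (v n) U V ▸ eLpNorm_sub_le ((hu n).sub hU) ((hv n).sub hV) hp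

end

theorem upwind_flux_L2_convergence_general
    {X : Type*} [MeasurableSpace X] (μ : Measure X)
    (kmin kmax : ℝ)
    (a b : ℕ → X → ℝ) (A B : X → ℝ) (β : ℕ → X → ℝ) (βlim : X → ℝ)
    (ha : ∀ l, Measurable (a l)) (hb : ∀ l, Measurable (b l))
    (hA : Measurable A) (hB : Measurable B)
    (ha_range : ∀ l x, a l x ∈ Set.Icc kmin kmax)
    (hb_range : ∀ l x, b l x ∈ Set.Icc kmin kmax)
    (hβ : ∀ l, MemLp (β l) 2 μ) (hβlim : MemLp βlim 2 μ)
    (ha_conv : Tendsto (fun l => eLpNorm (a l - A) 2 μ) atTop (𝓝 0))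
    (hb_conv : Tendsto (fun l => eLpNorm (b l - B) 2 μ) atTop (𝓝 0))
    (hβ_conv : Tendsto (fun l => eLpNorm (β l - βlim) 2 μ) atTop (𝓝 0)) :
    Tendsto (fun l => eLpNorm
        ((fun x => a l x * max (β l x) 0 - b l x * max (-(β l x)) 0) -
          fun x => A x * max (βlim x) 0 - B x * max (-(βlim x)) 0) 2 μ)
      atTop (𝓝 0) := by
  have h_bound {c : ℕ → X → ℝ} (hc : ∀ l x, c l x ∈ Set.Icc kmin kmax) l :
      ∀ᵐ x ∂μ, |c l x| ≤ max |kmin| |kmax| :=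
    ae_of_all _ fun x => abs_le_max_abs_abs (hc l x).1 (hc l x).2
  have h_pos := tendsto_eLpNorm_mul_sub_mul one_le_two ofNat_ne_top
    (fun l => (ha l).aestronglyMeasurable) (h_bound ha_range)
    (tendstoInMeasure_of_tendsto_eLpNorm two_ne_zero (fun l => (ha l).aestronglyMeasurable)
      hA.aestronglyMeasurable ha_conv)
    (fun l => (hβ l).pos_part.1) hβlim.pos_part
    ((LipschitzWith.id.max_const 0).tendsto_eLpNorm_comp_sub_comp hβ_conv)
  have h_neg := tendsto_eLpNorm_mul_sub_mul one_le_two ofNat_ne_top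
    (fun l => (hb l).aestronglyMeasurable) (h_bound hb_range)
    (tendstoInMeasure_of_tendsto_eLpNorm two_ne_zero (fun l => (hb l).aestronglyMeasurable)
      hB.aestronglyMeasurable hb_conv)
    (fun l => (hβ l).neg_part.1) hβlim.neg_part
    ((LipschitzWith.id.neg.max_const 0).tendsto_eLpNorm_comp_sub_comp hβ_conv)
  exact tendsto_eLpNorm_sub_sub_sub one_le_two
    (fun l => (ha l).aestronglyMeasurable.mul (hβ l).pos_part.1)
    (fun l => (hb l).aestronglyMeasurable.mul (hβ l).neg_part.1)
    (hA.aestronglyMeasurable.mul hβlim.pos_part.1) (hB.aestronglyMeasurable.mul hβlim.neg_part.1)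
    h_pos h_neg

/-- If `a_l, b_l : X → [k_min, k_max]` converge in `L²(X,μ)` to `a, b`, and `β_l → β`
strongly in `L²(X,μ)` (with `μ` a finite measure), then `a_l·β_l⁺ − b_l·β_l⁻` converges
strongly in `L²(X,μ)` to `a·β⁺ − b·β⁻`. -/
theorem upwind_flux_L2_convergence
    {X : Type*} [MeasurableSpace X] (μ : Measure X) [IsFiniteMeasure μ]
    (kmin kmax : ℝ) (hkmin : 0 < kmin) (hk : kmin ≤ kmax)
    (a b : ℕ → X → ℝ) (A B : X → ℝ) (β : ℕ → X → ℝ) (βlim : X → ℝ)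
    (ha : ∀ l, Measurable (a l)) (hb : ∀ l, Measurable (b l))
    (hA : Measurable A) (hB : Measurable B)
    (ha_range : ∀ l x, a l x ∈ Set.Icc kmin kmax)
    (hb_range : ∀ l x, b l x ∈ Set.Icc kmin kmax)
    (hβ : ∀ l, MemLp (β l) 2 μ) (hβlim : MemLp βlim 2 μ)
    (ha_conv : Tendsto (fun l => eLpNorm (a l - A) 2 μ) atTop (𝓝 0))
    (hb_conv : Tendsto (fun l => eLpNorm (b l - B) 2 μ) atTop (𝓝 0))
    (hβ_conv : Tendsto (fun l => eLpNorm (β l - βlim) 2 μ) atTop (𝓝 0)) :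
    Tendsto (fun l => eLpNorm
        ((fun x => a l x * max (β l x) 0 - b l x * max (-(β l x)) 0) -
          fun x => A x * max (βlim x) 0 - B x * max (-(βlim x)) 0) 2 μ)
      atTop (𝓝 0) :=
  upwind_flux_L2_convergence_general μ kmin kmax a b A B β βlim ha hb hA hB ha_range hb_range hβ
    hβlim ha_conv hb_conv hβ_conv
end

section
/- Discontinuous weak-L² Ascoli–Arzelà theorem: Let A be a measurable subset of ℝⁿ endowed with the Lebesgue measure, let 𝓡 be a dense subset of L²(A), and let T > 0. Let (v_m)_{m∈ℕ} be a sequence of functions [0,T] → L²(A) such that (a) sup_{m∈ℕ} sup_{t∈[0,T]} ‖v_m(t)‖_{L²(A)} < +∞, and (b) for every φ ∈ 𝓡 there exist a function ω_φ : [0,T]² → [0,∞) with ω_φ(s,t) → 0 as |s − t| → 0 (uniformly over pairs (s,t)), and a sequence (δ_m(φ))_{m∈ℕ} ⊂ [0,∞) with δ_m(φ) → 0 as m → ∞, such that |⟨v_m(s) − v_m(t), φ⟩_{L²(A)}| ≤ δ_m(φ) + ω_φ(s,t) for all (s,t) ∈ [0,T]² and all m ∈ ℕ. Then there exist a function v :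 [0,T] → L²(A) and a subsequence of (v_m)_{m∈ℕ} that converges to v uniformly on [0,T] weakly in L²(A); moreover v is continuous from [0,T] into L²(A) equipped with its weak topology. -/
open MeasureTheory Filter Topology RealInnerProductSpace

/-!
Extract, by a diagonal argument, a subsequence along which `⟪v m q, d⟫` converges for `q` in a
countable dense subset of `[0,T]` and `d` in a countable dense subset of `𝓡`. Approximate
equicontinuity survives passing to the limit in `m` and, by the uniform bound on `‖v m t‖`,
passes from `𝓡` to all of `L²(A)`; on the compact `[0,T]` it turns convergence on a dense
subset into uniform convergence, as in the classical Ascoli–Arzelà theorem. The pointwise weak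
limits exist by Banach–Steinhaus and Riesz representation, and are weakly continuous because
they are uniform limits of asymptotically equicontinuous functions.
-/

open Metric Set

theorem uniformCauchySeqOn_of_forall_dist_lt {α β : Type*} [PseudoMetricSpace β]
    {f : ℕ → α → β} {K : Set α}
    (h : ∀ ε > 0, ∃ g : ℕ → α → β, UniformCauchySeqOn g atTop K ∧
      ∀ m, ∀ t ∈ K, dist (f m t) (g m t) < ε) :
    UniformCauchySeqOn f atTop K := by
  refine uniformCauchySeqOn_iff.2 fun ε hε => ?_
  obtain ⟨g, hg, hfg⟩ := h (ε / 3) (by positivity)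
  obtain ⟨N, hN⟩ := uniformCauchySeqOn_iff.1 hg (ε / 3) (by positivity)
  refine ⟨N, fun m hm n hn t ht => ?_⟩
  calc dist (f m t) (f n t) ≤ dist (f m t) (g m t) + dist (g m t) (g n t) + dist (g n t) (f n t) :=
        dist_triangle4 _ _ _ _
    _ < ε := by linarith [hfg m t ht, hN m hm n hn t ht, dist_comm (f n t) (g n t) ▸ hfg n t ht]

theorem exists_strictMono_forall_tendsto_of_isBounded_range {ι β : Type*} [Countable ι]
    [PseudoMetricSpace β] [ProperSpace β] {a : ι → ℕ → β}
    (ha : ∀ i, Bornology.IsBounded (range (a i))) :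
    ∃ ψ : ℕ → ℕ, StrictMono ψ ∧ ∀ i, ∃ L, Tendsto (a i ∘ ψ) atTop (𝓝 L) := by
  obtain ⟨L, -, ψ, hψ, hL⟩ := (isCompact_univ_pi fun i => (ha i).isCompact_closure).tendsto_subseq
    (x := fun m i => a i m) fun m i _ => subset_closure (mem_range_self m)
  exact ⟨ψ, hψ, fun i => ⟨L i, tendsto_pi_nhds.1 hL i⟩⟩

def AsymptoticallyEquicontinuousOn {α β : Type*} [PseudoMetricSpace α] [PseudoMetricSpace β]
    (f : ℕ → α → β) (K : Set α) : Prop :=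
  ∀ ε > 0, ∃ η > 0, ∀ᶠ m in atTop, ∀ s ∈ K, ∀ t ∈ K, dist s t < η → dist (f m s) (f m t) < ε

namespace AsymptoticallyEquicontinuousOn

variable {α β : Type*} [PseudoMetricSpace α] [PseudoMetricSpace β] {f : ℕ → α → β} {K : Set α}

theorem of_dist_le_add {ω : α → α → ℝ} {δ : ℕ → ℝ}
    (hω : ∀ ε > 0, ∃ η > 0, ∀ s ∈ K, ∀ t ∈ K, dist s t < η → ω s t < ε)
    (hδ : Tendsto δ atTop (𝓝 0)) (h : ∀ s ∈ K, ∀ t ∈ K, ∀ m, dist (f m s) (f m t) ≤ δ m + ω s t) :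
    AsymptoticallyEquicontinuousOn f K := by
  intro ε hε
  obtain ⟨η, hη, hωη⟩ := hω (ε / 2) (by positivity)
  refine ⟨η, hη, (hδ.eventually_lt_const (half_pos hε)).mono fun m hm s hs t ht hst => ?_⟩
  linarith [h s hs t ht m, hωη s hs t ht hst]

theorem comp_tendsto (hf : AsymptoticallyEquicontinuousOn f K) {ψ : ℕ → ℕ}
    (hψ : Tendsto ψ atTop atTop) : AsymptoticallyEquicontinuousOn (f ∘ ψ) K := fun ε hε =>
  let ⟨η, hη, hfη⟩ := hf ε hε
  ⟨η, hη, hψ.eventually hfη⟩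

theorem of_forall_dist_lt
    (h : ∀ ε > 0, ∃ g : ℕ → α → β, AsymptoticallyEquicontinuousOn g K ∧
      ∀ m, ∀ t ∈ K, dist (f m t) (g m t) < ε) :
    AsymptoticallyEquicontinuousOn f K := by
  intro ε hε
  obtain ⟨g, hg, hfg⟩ := h (ε / 3) (by positivity)
  obtain ⟨η, hη, hgη⟩ := hg (ε / 3) (by positivity)
  refine ⟨η, hη, hgη.mono fun m hm s hs t ht hst => ?_⟩
  calc dist (f m s) (f m t) ≤ dist (f m s) (g m s) + dist (g m s) (g m t) + dist (g m t) (f m t) :=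
        dist_triangle4 _ _ _ _
    _ < ε := by linarith [hfg m s hs, hm s hs t ht hst, dist_comm (f m t) (g m t) ▸ hfg m t ht]

theorem uniformCauchySeqOn (hf : AsymptoticallyEquicontinuousOn f K) (hK : IsCompact K)
    {S : Set α} (hSK : S ⊆ K) (hKS : K ⊆ closure S) (hS : ∀ q ∈ S, CauchySeq fun m => f m q) :
    UniformCauchySeqOn f atTop K := by
  intro u hu
  obtain ⟨ε, hε, hεu⟩ := mem_uniformity_dist.1 hu
  obtain ⟨η, hη, hfη⟩ := hf (ε / 3) (by positivity)
  have hcover : K ⊆ ⋃ q ∈ S, ball q η := fun t ht => by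
    obtain ⟨q, hq, htq⟩ := mem_closure_iff.1 (hKS ht) η hη
    exact mem_iUnion₂.2 ⟨q, hq, htq⟩
  obtain ⟨S₀, hS₀S, hS₀, hKS₀⟩ :=
    hK.elim_finite_subcover_image (fun _ _ => isOpen_ball) hcover
  have hcauchy : ∀ᶠ p : ℕ × ℕ in atTop ×ˢ atTop, ∀ q ∈ S₀, dist (f p.1 q) (f p.2 q) < ε / 3 :=
    hS₀.eventually_all.2 fun q hq => by
      rw [prod_atTop_atTop_eq]
      exact (cauchySeq_iff_tendsto.1 (hS q (hS₀S hq))).eventually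
        (dist_mem_uniformity (by positivity))
  filter_upwards [hcauchy, hfη.prod_mk hfη] with p hp ⟨hp₁, hp₂⟩ t ht
  obtain ⟨q, hq, htq⟩ := mem_iUnion₂.1 (hKS₀ ht)
  have hqK := hSK (hS₀S hq)
  refine hεu ?_
  calc dist (f p.1 t) (f p.2 t)
      ≤ dist (f p.1 t) (f p.1 q) + dist (f p.1 q) (f p.2 q) + dist (f p.2 q) (f p.2 t) :=
        dist_triangle4 _ _ _ _
    _ < ε := by
      linarith [hp₁ t ht q hqK htq, hp q hq, hp₂ q hqK t ht (dist_comm q t ▸ htq)]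

theorem continuousOn_of_tendstoUniformlyOn (hf : AsymptoticallyEquicontinuousOn f K)
    {g : α → β} (hfg : TendstoUniformlyOn f g atTop K) : ContinuousOn g K := by
  refine (uniformContinuousOn_iff.2 fun ε hε => ?_).continuousOn
  obtain ⟨η, hη, hfη⟩ := hf (ε / 3) (by positivity)
  obtain ⟨m, hm, hfgm⟩ := (hfη.and (tendstoUniformlyOn_iff.1 hfg (ε / 3) (by positivity))).exists
  refine ⟨η, hη, fun s hs t ht hst => ?_⟩
  calc dist (g s) (g t) ≤ dist (g s) (f m s) + dist (f m s) (f m t) + dist (f m t) (g t) :=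
        dist_triangle4 _ _ _ _
    _ < ε := by linarith [hfgm s hs, hm s hs t ht hst, dist_comm (f m t) (g t) ▸ hfgm t ht]

end AsymptoticallyEquicontinuousOn

section InnerProductSpace

variable {E : Type*} [NormedAddCommGroup E] [InnerProductSpace ℝ E]

theorem exists_mem_forall_dist_inner_lt {D : Set E} (hD : Dense D) {ι : Type*} {x : ι → E}
    {C : ℝ} (hx : ∀ i, ‖x i‖ ≤ C) (φ : E) {ε : ℝ} (hε : 0 < ε) :
    ∃ d ∈ D, ∀ i, dist ⟪x i, φ⟫ ⟪x i, d⟫ < ε := by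
  obtain ⟨d, hd, hφd⟩ := hD.exists_dist_lt φ (div_pos hε (by positivity : 0 < |C| + 1))
  refine ⟨d, hd, fun i => ?_⟩
  calc dist ⟪x i, φ⟫ ⟪x i, d⟫ = |⟪x i, φ - d⟫| := by rw [Real.dist_eq, inner_sub_right]
    _ ≤ ‖x i‖ * ‖φ - d‖ := abs_real_inner_le_norm _ _
    _ ≤ (|C| + 1) * dist φ d := by
        rw [dist_eq_norm]
        gcongr
        linarith [hx i, le_abs_self C]
    _ < ε := (lt_div_iff₀' (by positivity)).1 hφd

theorem exists_tendsto_inner_of_cauchySeq_inner [CompleteSpace E] {w : ℕ → E}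
    (hw : ∀ φ, CauchySeq fun m => ⟪w m, φ⟫) :
    ∃ w' : E, ∀ φ, Tendsto (fun m => ⟪w m, φ⟫) atTop (𝓝 ⟪w', φ⟫) := by
  choose L hL using fun φ => cauchySeq_tendsto_of_complete (hw φ)
  -- Banach–Steinhaus makes the pointwise limit `L` continuous; Riesz represents it.
  let Λ : E →L[ℝ] ℝ :=
    continuousLinearMapOfTendsto (fun m => innerSL ℝ (w m)) (tendsto_pi_nhds.2 hL)
  refine ⟨(InnerProductSpace.toDual ℝ E).symm Λ, fun φ => ?_⟩
  rw [InnerProductSpace.toDual_symm_apply]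
  exact hL φ

theorem exists_subseq_tendstoUniformlyOn_inner [CompleteSpace E]
    [TopologicalSpace.SeparableSpace E] {α : Type*} [PseudoMetricSpace α] {K : Set α}
    (hK : IsCompact K) {𝓡 : Set E} (h𝓡 : Dense 𝓡) {v : ℕ → α → E} {C : ℝ}
    (hv : ∀ m, ∀ t ∈ K, ‖v m t‖ ≤ C)
    (hequi : ∀ φ ∈ 𝓡, AsymptoticallyEquicontinuousOn (fun m t => ⟪v m t, φ⟫) K) :
    ∃ (w : α → E) (ψ : ℕ → ℕ), StrictMono ψ ∧
      (∀ φ, TendstoUniformlyOn (fun m t => ⟪v (ψ m) t, φ⟫) (fun t => ⟪w t, φ⟫) atTop K) ∧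
      ∀ φ, ContinuousOn (fun t => ⟪w t, φ⟫) K := by
  obtain ⟨D, hD𝓡, hDc, hD⟩ := h𝓡.exists_countable_dense_subset
  obtain ⟨S, hSK, hSc, hKS⟩ := hK.isSeparable.exists_countable_dense_subset
  have := hDc.to_subtype
  have := hSc.to_subtype
  obtain ⟨ψ, hψ, hψDS⟩ := exists_strictMono_forall_tendsto_of_isBounded_range
    (a := fun (p : D × S) m => ⟪v m p.2, p.1⟫) fun p => isBounded_iff_forall_norm_le.2
      ⟨C * ‖(p.1 : E)‖, forall_mem_range.2 fun m => (norm_inner_le_norm _ _).trans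
        (mul_le_mul_of_nonneg_right (hv m p.2 (hSK p.2.2)) (norm_nonneg _))⟩
  set f : E → ℕ → α → ℝ := fun φ m t => ⟪v (ψ m) t, φ⟫
  have happrox : ∀ φ, ∀ ε > 0, ∃ d ∈ D, ∀ m, ∀ t ∈ K, dist (f φ m t) (f d m t) < ε := by
    intro φ ε hε
    obtain ⟨d, hd, hφd⟩ := exists_mem_forall_dist_inner_lt hD
      (x := fun p : ℕ × K => v (ψ p.1) p.2) (fun p => hv _ _ p.2.2) φ hε
    exact ⟨d, hd, fun m t ht => hφd (m, ⟨t, ht⟩)⟩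
  have hequiAll : ∀ φ, AsymptoticallyEquicontinuousOn (f φ) K := fun φ =>
    .of_forall_dist_lt fun ε hε =>
      let ⟨d, hd, hφd⟩ := happrox φ ε hε
      ⟨f d, (hequi d (hD𝓡 hd)).comp_tendsto hψ.tendsto_atTop, hφd⟩
  have hcauchy : ∀ φ, UniformCauchySeqOn (f φ) atTop K := fun φ =>
    uniformCauchySeqOn_of_forall_dist_lt fun ε hε =>
      let ⟨d, hd, hφd⟩ := happrox φ ε hε
      ⟨f d, (hequiAll d).uniformCauchySeqOn hK hSK hKS fun q hq =>
        (hψDS (⟨d, hd⟩, ⟨q, hq⟩)).choose_spec.cauchySeq, hφd⟩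
  choose! w hw using fun t (ht : t ∈ K) =>
    exists_tendsto_inner_of_cauchySeq_inner fun φ => (hcauchy φ).cauchySeq ht
  have hunif : ∀ φ, TendstoUniformlyOn (f φ) (fun t => ⟪w t, φ⟫) atTop K := fun φ =>
    (hcauchy φ).tendstoUniformlyOn_of_tendsto fun t ht => hw t ht φ
  exact ⟨w, ψ, hψ, hunif, fun φ => (hequiAll φ).continuousOn_of_tendstoUniformlyOn (hunif φ)⟩

end InnerProductSpace

theorem discontinuous_weak_L2_AscoliArzela_general
    {n : ℕ} (A : Set (Fin n → ℝ))
    (𝓡 : Set (Lp ℝ 2 (volume.restrict A))) (h𝓡 : Dense 𝓡)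
    (T : ℝ)
    (v : ℕ → ℝ → Lp ℝ 2 (volume.restrict A))
    (hbound : ∃ C : ℝ, ∀ m : ℕ, ∀ t ∈ Set.Icc (0 : ℝ) T, ‖v m t‖ ≤ C)
    (hequi : ∀ φ ∈ 𝓡, ∃ (ω : ℝ → ℝ → ℝ) (δ : ℕ → ℝ),
      (∀ s t : ℝ, 0 ≤ ω s t) ∧ (∀ m, 0 ≤ δ m) ∧
      (∀ ε > (0 : ℝ), ∃ η > (0 : ℝ), ∀ s ∈ Set.Icc (0 : ℝ) T, ∀ t ∈ Set.Icc (0 : ℝ) T,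
        |s - t| < η → ω s t < ε) ∧
      Tendsto δ atTop (𝓝 0) ∧
      (∀ s ∈ Set.Icc (0 : ℝ) T, ∀ t ∈ Set.Icc (0 : ℝ) T, ∀ m : ℕ,
        |⟪v m s - v m t, φ⟫| ≤ δ m + ω s t)) :
    ∃ (vlim : ℝ → Lp ℝ 2 (volume.restrict A)) (ψ : ℕ → ℕ), StrictMono ψ ∧
      (∀ φ : Lp ℝ 2 (volume.restrict A),
        TendstoUniformlyOn (fun m t => (⟪v (ψ m) t, φ⟫ : ℝ))
          (fun t => (⟪vlim t, φ⟫ : ℝ)) atTop (Set.Icc 0 T)) ∧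
      (∀ φ : Lp ℝ 2 (volume.restrict A),
        ContinuousOn (fun t => (⟪vlim t, φ⟫ : ℝ)) (Set.Icc 0 T)) := by
  have : Fact ((2 : ENNReal) ≠ ⊤) := ⟨ENNReal.ofNat_ne_top⟩
  obtain ⟨C, hC⟩ := hbound
  refine exists_subseq_tendstoUniformlyOn_inner isCompact_Icc h𝓡 hC fun φ hφ => ?_
  obtain ⟨ω, δ, -, -, hω, hδ, hvω⟩ := hequi φ hφ
  refine .of_dist_le_add (ω := ω) (fun ε hε => ?_) hδ fun s hs t ht m => ?_
  · simpa only [Real.dist_eq] using hω ε hε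
  · rw [Real.dist_eq, ← inner_sub_left]
    exact hvω s hs t ht m

/-- Discontinuous weak-`L²` Ascoli–Arzelà theorem: a sequence of functions from `[0,T]`
to `L²(A)` that is uniformly bounded and, against every element of a dense subset `𝓡`,
satisfies an approximate equicontinuity estimate `|⟨v_m(s) − v_m(t), φ⟩| ≤ δ_m(φ) + ω_φ(s,t)`,
has a subsequence converging uniformly on `[0,T]` weakly in `L²(A)` to a limit that is
weakly continuous. -/
theorem discontinuous_weak_L2_AscoliArzela
    {n : ℕ} (A : Set (Fin n → ℝ)) (hA : MeasurableSet A)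
    (𝓡 : Set (Lp ℝ 2 (volume.restrict A))) (h𝓡 : Dense 𝓡)
    (T : ℝ) (hT : 0 < T)
    (v : ℕ → ℝ → Lp ℝ 2 (volume.restrict A))
    (hbound : ∃ C : ℝ, ∀ m : ℕ, ∀ t ∈ Set.Icc (0 : ℝ) T, ‖v m t‖ ≤ C)
    (hequi : ∀ φ ∈ 𝓡, ∃ (ω : ℝ → ℝ → ℝ) (δ : ℕ → ℝ),
      (∀ s t : ℝ, 0 ≤ ω s t) ∧ (∀ m, 0 ≤ δ m) ∧
      (∀ ε > (0 : ℝ), ∃ η > (0 : ℝ), ∀ s ∈ Set.Icc (0 : ℝ) T, ∀ t ∈ Set.Icc (0 : ℝ) T,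
        |s - t| < η → ω s t < ε) ∧
      Tendsto δ atTop (𝓝 0) ∧
      (∀ s ∈ Set.Icc (0 : ℝ) T, ∀ t ∈ Set.Icc (0 : ℝ) T, ∀ m : ℕ,
        |⟪v m s - v m t, φ⟫| ≤ δ m + ω s t)) :
    ∃ (vlim : ℝ → Lp ℝ 2 (volume.restrict A)) (ψ : ℕ → ℕ), StrictMono ψ ∧
      (∀ φ : Lp ℝ 2 (volume.restrict A),
        TendstoUniformlyOn (fun m t => (⟪v (ψ m) t, φ⟫ : ℝ))
          (fun t => (⟪vlim t, φ⟫ : ℝ)) atTop (Set.Icc 0 T)) ∧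
      (∀ φ : Lp ℝ 2 (volume.restrict A),
        ContinuousOn (fun t => (⟪vlim t, φ⟫ : ℝ)) (Set.Icc 0 T)) :=
  discontinuous_weak_L2_AscoliArzela_general A 𝓡 h𝓡 T v hbound hequi
end

section
/- Let P ⊆ ℝᵈ be the convex hull of a finite set of points (a polytope). Then there exists a constant C ≥ 0, depending only on P, such that for every ξ ∈ ℝᵈ, the Lebesgue measure of the set {x ∈ P : x + ξ ∉ P} is at most C·‖ξ‖. -/
/-!
If the convex body `K` contains the ball `closedBall c ρ` and `‖ξ‖ = t ρ ≤ ρ`, then every point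
of the shrunken copy `homothety c (1 - t) '' K` stays in `K` after translation by `ξ`, being a
convex combination with weight `t` of a point of `K` and a point of the ball. So the points
leaving `K` lie in a shell of measure `(1 - (1 - t) ^ d) μ K ≤ d t μ K` by Bernoulli's inequality.
Large translations are trivial, and a convex set with empty interior is null.
-/

open MeasureTheory Metric Set AffineMap Module

section

variable {E : Type*} [NormedAddCommGroup E] [NormedSpace ℝ E] {K : Set E}

theorem Convex.image_homothety_subset (hK : Convex ℝ K) {c : E} (hc : c ∈ K) {r : ℝ}
    (hr : r ∈ Icc 0 1) : homothety c r '' K ⊆ K := by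
  rintro _ ⟨y, hy, rfl⟩
  rw [homothety_eq_lineMap]
  exact hK.lineMap_mem hc hy hr

theorem Convex.setOf_add_notMem_subset_diff_image_homothety (hK : Convex ℝ K) {c : E} {ρ : ℝ}
    (hρ : 0 < ρ) (hball : closedBall c ρ ⊆ K) {ξ : E} (hξ : ‖ξ‖ ≤ ρ) :
    {x ∈ K | x + ξ ∉ K} ⊆ K \ homothety c (1 - ‖ξ‖ / ρ) '' K := by
  rintro x ⟨hxK, hxξ⟩
  refine ⟨hxK, ?_⟩
  rintro ⟨y, hy, rfl⟩
  rcases eq_or_ne ξ 0 with rfl | hξ0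
  · simp_all
  set t := ‖ξ‖ / ρ
  have ht : t ≠ 0 := by positivity
  have hcomb : homothety c (1 - t) y + ξ = lineMap y (c + t⁻¹ • ξ) t := by
    rw [homothety_apply, lineMap_apply_module, smul_add, smul_inv_smul₀ ht, vsub_eq_sub,
      vadd_eq_add]
    module
  have hball_mem : c + t⁻¹ • ξ ∈ K := hball <| by
    rw [mem_closedBall, dist_eq_norm, add_sub_cancel_left, norm_smul, norm_inv, Real.norm_eq_abs,
      abs_of_pos (by positivity), inv_div, div_mul_cancel₀ _ (norm_ne_zero_iff.2 hξ0)]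
  exact hxξ (hcomb ▸ hK.lineMap_mem hy hball_mem ⟨by positivity, div_le_one_of_le₀ hξ hρ.le⟩)

variable [FiniteDimensional ℝ E] [MeasurableSpace E] [BorelSpace E] (μ : Measure E)
  [μ.IsAddHaarMeasure]

theorem Convex.addHaar_diff_image_homothety (hK : Convex ℝ K) (hμK : μ K ≠ ⊤) {c : E} {r : ℝ}
    (hr : 0 ≤ r) (hsub : homothety c r '' K ⊆ K) :
    μ (K \ homothety c r '' K) = ENNReal.ofReal (1 - r ^ finrank ℝ E) * μ K := by
  rw [measure_sdiff hsub ((hK.affine_image _).nullMeasurableSet μ)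
      (ne_top_of_le_ne_top hμK (measure_mono hsub)), Measure.addHaar_image_homothety,
    abs_of_nonneg (by positivity), ENNReal.ofReal_sub _ (by positivity),
    ENNReal.sub_mul (fun _ _ => hμK), ENNReal.ofReal_one, one_mul]

theorem Convex.addHaar_eq_zero_of_interior_eq_empty (hK : Convex ℝ K) (hint : interior K = ∅) :
    μ K = 0 :=
  measure_mono_null (by rw [frontier, hint, sdiff_empty]; exact subset_closure)
    (hK.addHaar_frontier μ)

theorem Convex.addHaar_setOf_add_notMem_le_of_norm_le (hK : Convex ℝ K) (hμK : μ K ≠ ⊤) {c : E}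
    {ρ : ℝ} (hρ : 0 < ρ) (hball : closedBall c ρ ⊆ K) {ξ : E} (hξ : ‖ξ‖ ≤ ρ) :
    μ {x ∈ K | x + ξ ∉ K} ≤ ENNReal.ofReal (finrank ℝ E * (‖ξ‖ / ρ)) * μ K := by
  set t := ‖ξ‖ / ρ
  have ht : 0 ≤ t := by positivity
  have ht1 : t ≤ 1 := div_le_one_of_le₀ hξ hρ.le
  have h1t : 1 - t ∈ Icc 0 1 := ⟨sub_nonneg.2 ht1, sub_le_self _ ht⟩
  have hbernoulli : 1 - (1 - t) ^ finrank ℝ E ≤ finrank ℝ E * t := by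
    have := one_add_mul_le_pow (a := -t) (by linarith) (finrank ℝ E)
    rw [← sub_eq_add_neg] at this
    linarith
  calc μ {x ∈ K | x + ξ ∉ K} ≤ μ (K \ homothety c (1 - t) '' K) :=
        measure_mono (hK.setOf_add_notMem_subset_diff_image_homothety hρ hball hξ)
    _ = ENNReal.ofReal (1 - (1 - t) ^ finrank ℝ E) * μ K :=
        hK.addHaar_diff_image_homothety μ hμK h1t.1
          (hK.image_homothety_subset (hball (mem_closedBall_self hρ.le)) h1t)
    _ ≤ ENNReal.ofReal (finrank ℝ E * t) * μ K := by gcongr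

theorem Convex.addHaar_setOf_add_notMem_le (hK : Convex ℝ K) (hμK : μ K ≠ ⊤) {c : E} {ρ : ℝ}
    (hρ : 0 < ρ) (hball : closedBall c ρ ⊆ K) (ξ : E) :
    μ {x ∈ K | x + ξ ∉ K} ≤ ENNReal.ofReal ((finrank ℝ E + 1) / ρ * ‖ξ‖) * μ K := by
  rcases le_or_gt ‖ξ‖ ρ with hξ | hξ
  · refine (hK.addHaar_setOf_add_notMem_le_of_norm_le μ hμK hρ hball hξ).trans ?_
    gcongr ENNReal.ofReal ?_ * _
    rw [← mul_div_assoc, div_mul_eq_mul_div]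
    gcongr
    linarith
  · calc μ {x ∈ K | x + ξ ∉ K} ≤ ENNReal.ofReal 1 * μ K := by
          rw [ENNReal.ofReal_one, one_mul]
          exact measure_mono (sep_subset _ _)
      _ ≤ ENNReal.ofReal ((finrank ℝ E + 1) / ρ * ‖ξ‖) * μ K := by
          gcongr
          rw [div_mul_eq_mul_div, one_le_div hρ]
          nlinarith [norm_nonneg ξ]

theorem Convex.exists_addHaar_setOf_add_notMem_le (hK : Convex ℝ K)
    (hKb : Bornology.IsBounded K) :
    ∃ C : ℝ, 0 ≤ C ∧ ∀ ξ : E, μ {x ∈ K | x + ξ ∉ K} ≤ ENNReal.ofReal (C * ‖ξ‖) := by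
  rcases (interior K).eq_empty_or_nonempty with hint | ⟨c, hc⟩
  · refine ⟨0, le_rfl, fun ξ => ?_⟩
    rw [measure_mono_null (sep_subset _ _) (hK.addHaar_eq_zero_of_interior_eq_empty μ hint)]
    exact bot_le
  · obtain ⟨ρ, hρ, hball⟩ := nhds_basis_closedBall.mem_iff.1 (mem_interior_iff_mem_nhds.1 hc)
    have hμK : μ K ≠ ⊤ := hKb.measure_lt_top.ne
    refine ⟨(finrank ℝ E + 1) / ρ * (μ K).toReal, by positivity, fun ξ => ?_⟩
    rw [mul_right_comm, ENNReal.ofReal_mul (by positivity), ENNReal.ofReal_toReal hμK]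
    exact hK.addHaar_setOf_add_notMem_le μ hμK hρ hball ξ

end

/-- For a polytope `P ⊆ ℝᵈ` (the convex hull of a finite set of points), there exists a
constant `C ≥ 0`, depending only on `P`, such that for every translation vector `ξ`, the
Lebesgue measure of `{x ∈ P : x + ξ ∉ P}` is at most `C·‖ξ‖`. -/
theorem polytope_translate_measure_estimate
    {d : ℕ} (s : Finset (EuclideanSpace ℝ (Fin d)))
    (P : Set (EuclideanSpace ℝ (Fin d)))
    (hP : P = convexHull ℝ (s : Set (EuclideanSpace ℝ (Fin d)))) :
    ∃ C : ℝ, 0 ≤ C ∧ ∀ ξ : EuclideanSpace ℝ (Fin d),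
      volume {x ∈ P | x + ξ ∉ P} ≤ ENNReal.ofReal (C * ‖ξ‖) := by
  subst hP
  exact (convex_convexHull ℝ _).exists_addHaar_setOf_add_notMem_le volume
    (s.finite_toSet.isCompact_convexHull ℝ).isBounded
end
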